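/- Let ε ∈ (0,1), let c : {0,1}^n → {−1,1}, and let T ⊆ [n] be such that Σ_{i ∈ [n]\T} Inf_i(c) ≤ ε/2. Suppose real numbers (α_V)_{V ⊆ T} satisfy |α_V − ĉ(V)| ≤ √(ε/2)·2^{-|T|/2} for every V ⊆ T (identifying each V ⊆ T with its indicator string in {0,1}^n). Define h(x) = Σ_{V ⊆ T} α_V·(−1)^{V·x} and let g : {0,1}^n → {−1,1} be any sign function of h (g(x)·h(x) ≥ 0 for all x). Then Pr_{x uniform in {0,1}^n}[c(x) ≠ g(x)] ≤ ε. -/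

import Mathlib

/-!
Put `d = c - h`. Wherever `g` disagrees with `c`, the sign condition `g h ≥ 0` forces `|d| ≥ 1`,
so the disagreement probability is at most `E[d²]`, which by Parseval is `Σ_S d̂(S)²`.
For `S ⊆ T` we have `d̂(S) = ĉ(S) - α_S`, and these `2^|T|` terms contribute at most
`2^|T| · (ε/2) 2^-|T| = ε/2`. For `S ⊄ T` we have `d̂(S) = ĉ(S)` and `S_i = 1` for some `i ∉ T`,
so these terms are bounded by `Σ_{i ∉ T} Inf_i(c) ≤ ε/2`.
-/

open Finset

/-- The character `χ_V(x) = (-1)^{V·x}` on the Boolean cube. -/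
noncomputable def chi {n : ℕ} (V x : Fin n → ZMod 2) : ℝ :=
  (-1 : ℝ) ^ (∑ i, V i * x i).val

/-- The Fourier coefficient `f̂(S) = 2^{-n} Σ_x f(x) (-1)^{S·x}`. -/
noncomputable def fhat {n : ℕ} (f : (Fin n → ZMod 2) → ℝ)
    (S : Fin n → ZMod 2) : ℝ :=
  (2 ^ n : ℝ)⁻¹ * ∑ x : Fin n → ZMod 2, f x * chi S x

/-- The `i`-th influence `Inf_i(f) = Σ_{S : S_i = 1} f̂(S)²`. -/
noncomputable def influence {n : ℕ} (i : Fin n) (f : (Fin n → ZMod 2) → ℝ) : ℝ :=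
  ∑ S ∈ Finset.univ.filter (fun S : Fin n → ZMod 2 => S i = 1), fhat f S ^ 2

lemma ZMod.neg_one_pow_val_add_two (a b : ZMod 2) :
    (-1 : ℝ) ^ (a + b).val = (-1) ^ a.val * (-1) ^ b.val := by
  rw [ZMod.val_add, ← neg_one_pow_eq_pow_mod_two, pow_add]

lemma ZMod.eq_one_of_ne_zero_two {a : ZMod 2} (ha : a ≠ 0) : a = 1 := by
  revert a; decide

section Fourier

variable {n : ℕ}

lemma cube_add_self (V : Fin n → ZMod 2) : V + V = 0 :=
  funext fun i => CharTwo.add_self_eq_zero (V i)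

lemma chi_comm (V x : Fin n → ZMod 2) : chi V x = chi x V := by
  simp only [chi, mul_comm]

lemma chi_zero_left (x : Fin n → ZMod 2) : chi 0 x = 1 := by
  simp [chi]

lemma chi_add_right (V x y : Fin n → ZMod 2) : chi V (x + y) = chi V x * chi V y := by
  simp only [chi, Pi.add_apply, mul_add, sum_add_distrib, ZMod.neg_one_pow_val_add_two]

lemma chi_add_left (V W x : Fin n → ZMod 2) : chi (V + W) x = chi V x * chi W x := by
  simp only [chi_comm _ x, chi_add_right]

lemma chi_single_of_ne_zero {V : Fin n → ZMod 2} {i : Fin n} (hi : V i ≠ 0) :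
    chi V (Pi.single i 1) = -1 := by
  simp [chi, Pi.single_apply, ZMod.eq_one_of_ne_zero_two hi,
    show ZMod.val (1 : ZMod 2) = 1 from rfl]

lemma sum_chi_of_ne_zero {V : Fin n → ZMod 2} (hV : V ≠ 0) : ∑ x, chi V x = 0 := by
  obtain ⟨i, hi⟩ := Function.ne_iff.1 hV
  have hflip : ∑ x, chi V (x + Pi.single i 1) = ∑ x, chi V x :=
    Fintype.sum_equiv (Equiv.addRight (Pi.single i 1)) (fun x => chi V (x + Pi.single i 1))
      (chi V) fun _ => rfl
  rw [Fintype.sum_congr _ _ fun x => by rw [chi_add_right, chi_single_of_ne_zero hi, mul_neg_one],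
    sum_neg_distrib] at hflip
  linarith

lemma sum_chi_mul_chi (V W : Fin n → ZMod 2) :
    ∑ x, chi V x * chi W x = if V = W then (2 ^ n : ℝ) else 0 := by
  simp_rw [← chi_add_left]
  split_ifs with h
  · simp [h, cube_add_self, chi_zero_left, card_univ]
  · refine sum_chi_of_ne_zero fun hVW => h ?_
    simpa [add_assoc, cube_add_self] using congrArg (· + W) hVW

lemma sum_fhat_mul_chi (f : (Fin n → ZMod 2) → ℝ) (x : Fin n → ZMod 2) :
    ∑ S, fhat f S * chi S x = f x := by
  have horth (y : Fin n → ZMod 2) : ∑ S, chi S y * chi S x = if y = x then (2 ^ n : ℝ) else 0 := by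
    simp_rw [chi_comm _ y, chi_comm _ x, sum_chi_mul_chi]
  calc ∑ S, fhat f S * chi S x = (2 ^ n : ℝ)⁻¹ * ∑ y, f y * ∑ S, chi S y * chi S x := by
        simp_rw [fhat, mul_sum, sum_mul]
        rw [sum_comm]
        exact sum_congr rfl fun _ _ => sum_congr rfl fun _ _ => by ring
    _ = f x := by
        simp_rw [horth, mul_ite, mul_zero, sum_ite_eq', mem_univ, if_true]
        field_simp

lemma sum_fhat_sq (f : (Fin n → ZMod 2) → ℝ) :
    ∑ S, fhat f S ^ 2 = (2 ^ n : ℝ)⁻¹ * ∑ x, f x ^ 2 := by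
  calc ∑ S, fhat f S ^ 2 = (2 ^ n : ℝ)⁻¹ * ∑ x, f x * ∑ S, fhat f S * chi S x := by
        conv_lhs => enter [2, S]; rw [sq]; enter [2]; rw [fhat]
        simp_rw [mul_sum]
        rw [sum_comm]
        exact sum_congr rfl fun _ _ => sum_congr rfl fun _ _ => by ring
    _ = (2 ^ n : ℝ)⁻¹ * ∑ x, f x ^ 2 := by simp_rw [sum_fhat_mul_chi, sq]

lemma fhat_sub (f g : (Fin n → ZMod 2) → ℝ) (S : Fin n → ZMod 2) :
    fhat (fun x => f x - g x) S = fhat f S - fhat g S := by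
  simp only [fhat, sub_mul, sum_sub_distrib, mul_sub]

lemma fhat_sum_chi (F : Finset (Fin n → ZMod 2)) (α : (Fin n → ZMod 2) → ℝ)
    (S : Fin n → ZMod 2) :
    fhat (fun x => ∑ V ∈ F, α V * chi V x) S = if S ∈ F then α S else 0 := by
  calc fhat (fun x => ∑ V ∈ F, α V * chi V x) S
      = (2 ^ n : ℝ)⁻¹ * ∑ V ∈ F, α V * ∑ x, chi V x * chi S x := by
        simp_rw [fhat, sum_mul, mul_sum]
        rw [sum_comm]
        exact sum_congr rfl fun _ _ => sum_congr rfl fun _ _ => by ring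
    _ = if S ∈ F then α S else 0 := by
        simp_rw [sum_chi_mul_chi, mul_ite, mul_zero, sum_ite_eq']
        split_ifs
        · field_simp
        · simp

lemma sum_fhat_sub_sum_chi_sq (f : (Fin n → ZMod 2) → ℝ) (F : Finset (Fin n → ZMod 2))
    (α : (Fin n → ZMod 2) → ℝ) :
    ∑ S, fhat (fun x => f x - ∑ V ∈ F, α V * chi V x) S ^ 2
      = ∑ S ∈ F, (fhat f S - α S) ^ 2 + ∑ S ∈ Fᶜ, fhat f S ^ 2 := by
  rw [← sum_add_sum_compl F]
  congr 1 <;> refine sum_congr rfl fun S hS => ?_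
  · rw [fhat_sub, fhat_sum_chi, if_pos hS]
  · rw [fhat_sub, fhat_sum_chi, if_neg (mem_compl.1 hS), sub_zero]

lemma influence_nonneg (i : Fin n) (f : (Fin n → ZMod 2) → ℝ) : 0 ≤ influence i f :=
  sum_nonneg fun _ _ => sq_nonneg _

end Fourier

def supportedIn {n : ℕ} (T : Finset (Fin n)) : Finset (Fin n → ZMod 2) :=
  univ.filter fun V => ∀ i, V i = 1 → i ∈ T

lemma card_supportedIn_le {n : ℕ} (T : Finset (Fin n)) : #(supportedIn T) ≤ 2 ^ #T := by
  have hinj : Set.InjOn (fun (V : Fin n → ZMod 2) (i : T) => V i) (supportedIn T) := by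
    intro V hV W hW hVW
    simp only [supportedIn, coe_filter, mem_univ, true_and, Set.mem_ofPred_eq] at hV hW
    funext i
    by_cases hi : i ∈ T
    · exact congrFun hVW ⟨i, hi⟩
    · have hV0 : V i = 0 := by_contra fun h => hi (hV i (ZMod.eq_one_of_ne_zero_two h))
      have hW0 : W i = 0 := by_contra fun h => hi (hW i (ZMod.eq_one_of_ne_zero_two h))
      rw [hV0, hW0]
  simpa using card_le_card_of_injOn _ (fun _ _ => mem_coe.2 (mem_univ _)) hinj

lemma sum_fhat_sq_compl_supportedIn_le {n : ℕ} (f : (Fin n → ZMod 2) → ℝ)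
    (T : Finset (Fin n)) :
    ∑ S ∈ (supportedIn T)ᶜ, fhat f S ^ 2 ≤ ∑ i ∈ Tᶜ, influence i f := by
  have hterm_nonneg (S : Fin n → ZMod 2) (i : Fin n) :
      0 ≤ if S i = 1 then fhat f S ^ 2 else 0 := by
    split_ifs <;> positivity
  calc ∑ S ∈ (supportedIn T)ᶜ, fhat f S ^ 2
      ≤ ∑ S ∈ (supportedIn T)ᶜ, ∑ i ∈ Tᶜ, if S i = 1 then fhat f S ^ 2 else 0 := by
        refine sum_le_sum fun S hS => ?_
        obtain ⟨i, hSi, hiT⟩ : ∃ i, S i = 1 ∧ i ∉ T := by simpa [supportedIn] using hS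
        simpa [hSi] using single_le_sum (fun j _ => hterm_nonneg S j) (mem_compl.2 hiT)
    _ ≤ ∑ S, ∑ i ∈ Tᶜ, if S i = 1 then fhat f S ^ 2 else 0 :=
        sum_le_sum_of_subset_of_nonneg (subset_univ _)
          fun S _ _ => sum_nonneg fun i _ => hterm_nonneg S i
    _ = ∑ i ∈ Tᶜ, influence i f := by
        rw [sum_comm]
        simp only [influence, sum_filter]

lemma one_le_sq_sub_of_ne {c g h : ℝ} (hc : c = 1 ∨ c = -1) (hg : g = 1 ∨ g = -1)
    (hcg : c ≠ g) (hgh : 0 ≤ g * h) : 1 ≤ (c - h) ^ 2 := by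
  have hgc : g = -c := by
    rcases hc with rfl | rfl <;> rcases hg with rfl | rfl <;> norm_num at *
  have hc2 : c ^ 2 = 1 := by rcases hc with rfl | rfl <;> norm_num
  subst hgc
  nlinarith [sq_nonneg h]

lemma card_ne_le_sum_sq_sub {α : Type*} [Fintype α] (c g h : α → ℝ)
    (hc : ∀ x, c x = 1 ∨ c x = -1) (hg : ∀ x, (g x = 1 ∨ g x = -1) ∧ 0 ≤ g x * h x) :
    (#{x | c x ≠ g x} : ℝ) ≤ ∑ x, (c x - h x) ^ 2 := by
  calc (#{x | c x ≠ g x} : ℝ) ≤ ∑ x ∈ {x | c x ≠ g x}, (c x - h x) ^ 2 := by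
        simpa using card_nsmul_le_sum _ _ (1 : ℝ) fun x hx =>
          one_le_sq_sub_of_ne (hc x) (hg x).1 (mem_filter.1 hx).2 (hg x).2
    _ ≤ ∑ x, (c x - h x) ^ 2 :=
        sum_le_sum_of_subset_of_nonneg (subset_univ _) fun _ _ _ => sq_nonneg _

lemma sum_sq_sub_le_card_mul_sq {ι : Type*} (s : Finset ι) (a b : ι → ℝ) {δ : ℝ}
    (h : ∀ i ∈ s, |a i - b i| ≤ δ) : ∑ i ∈ s, (b i - a i) ^ 2 ≤ #s * δ ^ 2 := by
  simpa using sum_le_card_nsmul s _ (δ ^ 2) fun i hi => by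
    rw [← sq_abs, abs_sub_comm]
    exact pow_le_pow_left₀ (abs_nonneg _) (h i hi) 2

theorem stmt9_general {n : ℕ} (ε : ℝ)
    (c : (Fin n → ZMod 2) → ℝ) (hc : ∀ x, c x = 1 ∨ c x = -1)
    (T : Finset (Fin n)) (hT : ∑ i ∈ Tᶜ, influence i c ≤ ε / 2)
    (α : (Fin n → ZMod 2) → ℝ)
    (hα : ∀ V : Fin n → ZMod 2, (∀ i, V i = 1 → i ∈ T) →
      |α V - fhat c V| ≤ Real.sqrt (ε / 2) * (Real.sqrt (2 ^ T.card))⁻¹)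
    (g : (Fin n → ZMod 2) → ℝ)
    (hg : ∀ x, (g x = 1 ∨ g x = -1) ∧
      0 ≤ g x * ∑ V ∈ Finset.univ.filter
          (fun V : Fin n → ZMod 2 => ∀ i, V i = 1 → i ∈ T),
        α V * chi V x) :
    (2 ^ n : ℝ)⁻¹ *
        ((Finset.univ.filter (fun x : Fin n → ZMod 2 => c x ≠ g x)).card : ℝ) ≤
      ε := by
  have hε : 0 ≤ ε := by linarith [sum_nonneg fun i (_ : i ∈ Tᶜ) => influence_nonneg i c]
  have hδ : (√(ε / 2) * (√(2 ^ #T))⁻¹) ^ 2 = ε / 2 / 2 ^ #T := by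
    rw [mul_pow, inv_pow, Real.sq_sqrt (by positivity), Real.sq_sqrt (by positivity)]
    ring
  have hcard : (#(supportedIn T) : ℝ) ≤ 2 ^ #T := by exact_mod_cast card_supportedIn_le T
  calc (2 ^ n : ℝ)⁻¹ * #{x | c x ≠ g x}
      ≤ (2 ^ n : ℝ)⁻¹ * ∑ x, (c x - ∑ V ∈ supportedIn T, α V * chi V x) ^ 2 := by
        gcongr
        exact card_ne_le_sum_sq_sub _ _ _ hc hg
    _ = ∑ S ∈ supportedIn T, (fhat c S - α S) ^ 2 + ∑ S ∈ (supportedIn T)ᶜ, fhat c S ^ 2 := by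
        rw [← sum_fhat_sq, sum_fhat_sub_sum_chi_sq]
    _ ≤ #(supportedIn T) * (ε / 2 / 2 ^ #T) + ε / 2 := by
        rw [← hδ]
        refine add_le_add (sum_sq_sub_le_card_mul_sq _ _ _ fun V hV => ?_)
          ((sum_fhat_sq_compl_supportedIn_le c T).trans hT)
        exact hα V (mem_filter.1 hV).2
    _ ≤ 2 ^ #T * (ε / 2 / 2 ^ #T) + ε / 2 := by gcongr
    _ = ε := by field_simp; ring

/-- Second phase of the junta-learning algorithm: if the influences outside
`T` sum to at most `ε/2` and the numbers `α_V` for `V ⊆ T` (identified with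
indicator strings) approximate the Fourier coefficients `ĉ(V)` to within
`√(ε/2)·2^{-|T|/2}`, then any sign function `g` of
`h(x) = Σ_{V ⊆ T} α_V (-1)^{V·x}` agrees with `c` except with probability at
most `ε` under the uniform distribution. -/
theorem stmt9 {n : ℕ} (ε : ℝ) (hε : ε ∈ Set.Ioo (0 : ℝ) 1)
    (c : (Fin n → ZMod 2) → ℝ) (hc : ∀ x, c x = 1 ∨ c x = -1)
    (T : Finset (Fin n)) (hT : ∑ i ∈ Tᶜ, influence i c ≤ ε / 2)
    (α : (Fin n → ZMod 2) → ℝ)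
    (hα : ∀ V : Fin n → ZMod 2, (∀ i, V i = 1 → i ∈ T) →
      |α V - fhat c V| ≤ Real.sqrt (ε / 2) * (Real.sqrt (2 ^ T.card))⁻¹)
    (g : (Fin n → ZMod 2) → ℝ)
    (hg : ∀ x, (g x = 1 ∨ g x = -1) ∧
      0 ≤ g x * ∑ V ∈ Finset.univ.filter
          (fun V : Fin n → ZMod 2 => ∀ i, V i = 1 → i ∈ T),
        α V * chi V x) :
    (2 ^ n : ℝ)⁻¹ *
        ((Finset.univ.filter (fun x : Fin n → ZMod 2 => c x ≠ g x)).card : ℝ) ≤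
      ε :=
  stmt9_general ε c hc T hT α hα g hg
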